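/- arXiv:0706.0879 — 2 statements merged into one kernel-verified Lean document; each statement's English description precedes it below -/
import Mathlib

section
/- Let λ > 0, let k ≥ 1 be an integer, and let W be a ℤ≥0-valued random variable with E[W] < ∞ such that E[(W − λ) g(W)] = E[(λ + 1{W = k}) (g(W+1) − g(W))] for every bounded function g : ℤ≥0 → ℝ. Then d_TV(L(W), Po(λ)) = P[W = k] · sup_{A ⊆ ℤ≥0} |g_A(k+1) − g_A(k)|, where g_A denotes the canonical solution of the Stein equation, g_A(0) = 0 and g_A(j+1) = (j! / λ^{j+1}) Σ_{i=0}^{j} (1_A(i) − Po(λ)(A)) λ^i / i!. -/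
/-!
For every `A ⊆ ℕ`, the Stein equation `λ g_A(j+1) − j g_A(j) = 1_A(j) − Po(λ)(A)` evaluated at `W`
and integrated gives `P(W ∈ A) − Po(λ)(A) = E[λ g_A(W+1) − W g_A(W)]`. The function `g_A` is
bounded (by `e^λ`: `g_A(j+1)` is `j!/λ^{j+1}` times minus a tail of a series with sum zero), so
the perturbed Stein identity applies to it, and the right-hand side collapses to
`−P(W = k) (g_A(k+1) − g_A(k))`. Taking absolute values and the supremum over `A` gives the claim.
-/

open MeasureTheory

/-- `Po(λ)(A) = Σ_{j ∈ A} e^{−λ} λ^j / j!`. -/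
noncomputable def poissonProb (lam : ℝ) (A : Set ℕ) : ℝ :=
  ∑' j : ℕ, Set.indicator A (fun j => Real.exp (-lam) * lam ^ j / (Nat.factorial j : ℝ)) j

/-- The canonical solution of the Poisson Stein equation for the test function `1_A`:
`g_A(0) = 0` and `g_A(j+1) = (j!/λ^{j+1}) Σ_{i=0}^{j} (1_A(i) − Po(λ)(A)) λ^i / i!`. -/
noncomputable def steinSol (lam : ℝ) (A : Set ℕ) : ℕ → ℝ
  | 0 => 0
  | (j + 1) => (Nat.factorial j : ℝ) / lam ^ (j + 1) *
      ∑ i ∈ Finset.range (j + 1),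
        (Set.indicator A (fun _ => (1 : ℝ)) i - poissonProb lam A) * lam ^ i /
          (Nat.factorial i : ℝ)

open Finset Real
open scoped Nat

lemma Real.hasSum_pow_div_factorial (x : ℝ) : HasSum (fun n : ℕ => x ^ n / n !) (exp x) := by
  rw [exp_eq_exp_ℝ]
  exact NormedSpace.expSeries_div_hasSum_exp x

lemma pow_add_div_factorial_le {x : ℝ} (hx : 0 ≤ x) (m n : ℕ) :
    x ^ (m + n) / (m + n)! ≤ x ^ n / n ! * (x ^ m / m !) := by
  have hfac : (n ! * m ! : ℝ) ≤ (m + n)! := by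
    rw [mul_comm]
    exact_mod_cast
      Nat.le_of_dvd (Nat.factorial_pos _) (Nat.factorial_mul_factorial_dvd_factorial_add m n)
  rw [div_mul_div_comm, pow_add, mul_comm (x ^ n)]
  exact div_le_div_of_nonneg_left (by positivity) (by positivity) hfac

lemma abs_sum_range_le_of_hasSum_zero {x : ℝ} (hx : 0 ≤ x) {f : ℕ → ℝ} (hf : HasSum f 0)
    (hfx : ∀ i, |f i| ≤ x ^ i / i !) (n : ℕ) :
    |∑ i ∈ range n, f i| ≤ x ^ n / n ! * exp x := by
  have htail : ∑ i ∈ range n, f i = -∑' m, f (m + n) := by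
    linarith [hf.summable.sum_add_tsum_nat_add n, hf.tsum_eq]
  have hdom : Summable fun m => x ^ n / n ! * (x ^ m / m !) :=
    (hasSum_pow_div_factorial x).summable.mul_left _
  have hbound : ∀ m, ‖f (m + n)‖ ≤ x ^ n / n ! * (x ^ m / m !) := fun m =>
    (hfx (m + n)).trans (pow_add_div_factorial_le hx m n)
  calc |∑ i ∈ range n, f i| = ‖∑' m, f (m + n)‖ := by rw [htail, abs_neg, Real.norm_eq_abs]
    _ ≤ ∑' m, x ^ n / n ! * (x ^ m / m !) := tsum_of_norm_bounded hdom.hasSum hbound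
    _ = x ^ n / n ! * exp x := by rw [tsum_mul_left, (hasSum_pow_div_factorial x).tsum_eq]

section Poisson

variable (lam : ℝ) (A : Set ℕ)

lemma poissonProb_eq_exp_neg_mul_tsum :
    poissonProb lam A = exp (-lam) * ∑' j, A.indicator (fun j => lam ^ j / j !) j := by
  rw [poissonProb, ← tsum_mul_left]
  congr 1
  funext j
  by_cases h : j ∈ A <;> simp [h, mul_div_assoc]

lemma hasSum_indicator_sub_poissonProb_mul :
    HasSum (fun i => (A.indicator (fun _ => (1 : ℝ)) i - poissonProb lam A) * lam ^ i / i !) 0 := by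
  have hA : HasSum (A.indicator fun j => lam ^ j / j !) (exp lam * poissonProb lam A) := by
    rw [poissonProb_eq_exp_neg_mul_tsum, ← mul_assoc, ← exp_add, add_neg_cancel, exp_zero, one_mul]
    exact ((hasSum_pow_div_factorial lam).summable.indicator A).hasSum
  have h := hA.sub ((hasSum_pow_div_factorial lam).mul_left (poissonProb lam A))
  rw [mul_comm, sub_self] at h
  refine h.congr_fun fun i => ?_
  by_cases hi : i ∈ A <;> simp [hi] <;> ring

variable {lam}

lemma poissonProb_nonneg (hlam : 0 ≤ lam) : 0 ≤ poissonProb lam A :=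
  tsum_nonneg fun _ => Set.indicator_nonneg (fun _ _ => by positivity) _

lemma poissonProb_le_one (hlam : 0 ≤ lam) : poissonProb lam A ≤ 1 := by
  have hle : ∑' j, A.indicator (fun j => lam ^ j / j !) j ≤ exp lam :=
    (hasSum_pow_div_factorial lam).tsum_eq ▸ Summable.tsum_le_tsum
      (Set.indicator_le_self' fun _ _ => by positivity)
      ((hasSum_pow_div_factorial lam).summable.indicator A) (hasSum_pow_div_factorial lam).summable
  calc poissonProb lam A ≤ exp (-lam) * exp lam := by
        rw [poissonProb_eq_exp_neg_mul_tsum]; gcongr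
    _ = 1 := by rw [← exp_add, neg_add_cancel, exp_zero]

end Poisson

section SteinSolution

variable {lam : ℝ} (A : Set ℕ)

lemma steinSol_stein_equation (hlam : lam ≠ 0) (j : ℕ) :
    lam * steinSol lam A (j + 1) - j * steinSol lam A j =
      A.indicator (fun _ => (1 : ℝ)) j - poissonProb lam A := by
  cases j with
  | zero => simp [steinSol, hlam]
  | succ m =>
    rw [steinSol, steinSol, sum_range_succ, Nat.factorial_succ]
    push_cast
    field_simp
    ring

lemma abs_steinSol_le (hlam : 0 < lam) (j : ℕ) : |steinSol lam A j| ≤ exp lam := by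
  cases j with
  | zero => simp [steinSol, (exp_pos lam).le]
  | succ n =>
    have hterm : ∀ i, |(A.indicator (fun _ => (1 : ℝ)) i - poissonProb lam A) * lam ^ i / i !|
        ≤ lam ^ i / i ! := by
      intro i
      have h0 := poissonProb_nonneg A hlam.le
      have h1 := poissonProb_le_one A hlam.le
      have hind : |A.indicator (fun _ => (1 : ℝ)) i - poissonProb lam A| ≤ 1 := by
        by_cases h : i ∈ A <;> simp [h, abs_le] <;> constructor <;> linarith
      rw [abs_div, abs_mul, abs_of_nonneg (by positivity : (0 : ℝ) ≤ lam ^ i), Nat.abs_cast]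
      gcongr
      exact mul_le_of_le_one_left (by positivity) hind
    have hsum := abs_sum_range_le_of_hasSum_zero hlam.le
      (hasSum_indicator_sub_poissonProb_mul lam A) hterm (n + 1)
    calc |steinSol lam A (n + 1)|
        = n ! / lam ^ (n + 1) * |∑ i ∈ range (n + 1),
            (A.indicator (fun _ => (1 : ℝ)) i - poissonProb lam A) * lam ^ i / i !| := by
          rw [steinSol, abs_mul, abs_of_pos (by positivity)]
      _ ≤ n ! / lam ^ (n + 1) * (lam ^ (n + 1) / (n + 1)! * exp lam) := by gcongr
      _ = exp lam / (n + 1) := by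
          rw [Nat.factorial_succ]
          push_cast
          field_simp
      _ ≤ exp lam := div_le_self (exp_pos lam).le (by linarith [n.cast_nonneg (α := ℝ)])

end SteinSolution

section PerturbedStein

variable {Ω : Type*} [MeasurableSpace Ω] {P : Measure Ω} {W : Ω → ℕ}

lemma integrable_comp_of_abs_le [IsFiniteMeasure P] (hW : Measurable W) {f : ℕ → ℝ} {C : ℝ}
    (hf : ∀ j, |f j| ≤ C) :
    Integrable (fun ω => f (W ω)) P :=
  .of_bound ((measurable_of_countable f).comp hW).aestronglyMeasurable C
    (ae_of_all _ fun ω => hf (W ω))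

lemma integral_ite_eq_mul_comp (hW : Measurable W) (k : ℕ) (f : ℕ → ℝ) :
    ∫ ω, (if W ω = k then (1 : ℝ) else 0) * f (W ω) ∂P = (P {ω | W ω = k}).toReal * f k := by
  have hind : (fun ω => (if W ω = k then (1 : ℝ) else 0) * f (W ω)) =
      {ω | W ω = k}.indicator fun _ => f k := by
    funext ω
    by_cases h : W ω = k <;> simp [h]
  have hk : MeasurableSet {ω | W ω = k} := hW (measurableSet_singleton k)
  rw [hind, integral_indicator_const _ hk, smul_eq_mul, measureReal_def]

lemma integral_indicator_comp_sub_const [IsProbabilityMeasure P] (hW : Measurable W) (A : Set ℕ)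
    (c : ℝ) :
    ∫ ω, (A.indicator (fun _ => (1 : ℝ)) (W ω) - c) ∂P = (P {ω | W ω ∈ A}).toReal - c := by
  have hind : (fun ω => A.indicator (fun _ => (1 : ℝ)) (W ω)) = (W ⁻¹' A).indicator 1 := by
    funext ω
    by_cases h : W ω ∈ A <;> simp [h]
  have hint : Integrable (fun ω => A.indicator (fun _ => (1 : ℝ)) (W ω)) P :=
    hind ▸ (integrable_const 1).indicator (hW .of_discrete)
  rw [integral_sub hint (integrable_const c), hind, integral_indicator_one (hW .of_discrete),
    integral_const, probReal_univ, one_smul, measureReal_def]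
  rfl

lemma integrable_sub_mul_comp_of_abs_le [IsFiniteMeasure P] (hW : Measurable W)
    (hint : Integrable (fun ω => (W ω : ℝ)) P) (lam : ℝ) {g : ℕ → ℝ} {C : ℝ}
    (hg : ∀ j, |g j| ≤ C) :
    Integrable (fun ω => ((W ω : ℝ) - lam) * g (W ω)) P := by
  have hdom : Integrable (fun ω => ((W ω : ℝ) + |lam|) * C) P :=
    (hint.add (integrable_const |lam|)).mul_const C
  refine .mono' hdom
    ((((measurable_of_countable _).comp hW).sub_const lam).mul
      ((measurable_of_countable g).comp hW)).aestronglyMeasurable (ae_of_all _ fun ω => ?_)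
  rw [Real.norm_eq_abs, abs_mul]
  refine mul_le_mul ((abs_sub _ _).trans ?_) (hg _) (abs_nonneg _) (by positivity)
  rw [Nat.abs_cast]

lemma integral_stein_operator_eq_of_perturbed [IsFiniteMeasure P] (hW : Measurable W)
    (hint : Integrable (fun ω => (W ω : ℝ)) P) {lam : ℝ} {k : ℕ} {g : ℕ → ℝ} {C : ℝ}
    (hg : ∀ j, |g j| ≤ C)
    (hstein : ∫ ω, ((W ω : ℝ) - lam) * g (W ω) ∂P =
        ∫ ω, (lam + if W ω = k then (1 : ℝ) else 0) * (g (W ω + 1) - g (W ω)) ∂P) :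
    ∫ ω, (lam * g (W ω + 1) - W ω * g (W ω)) ∂P =
      -((P {ω | W ω = k}).toReal * (g (k + 1) - g k)) := by
  have hdiff : ∀ j, |g (j + 1) - g j| ≤ 2 * C := fun j =>
    (abs_sub _ _).trans (by linarith [hg (j + 1), hg j])
  have hpert : Integrable
      (fun ω => (lam + if W ω = k then (1 : ℝ) else 0) * (g (W ω + 1) - g (W ω))) P := by
    refine integrable_comp_of_abs_le (P := P) hW
      (f := fun j => (lam + if j = k then (1 : ℝ) else 0) * (g (j + 1) - g j))
      (C := (|lam| + 1) * (2 * C)) fun j => ?_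
    rw [abs_mul]
    refine mul_le_mul ((abs_add_le _ _).trans ?_) (hdiff j) (abs_nonneg _) (by positivity)
    split_ifs <;> simp
  have hind : Integrable
      (fun ω => (if W ω = k then (1 : ℝ) else 0) * (g (W ω + 1) - g (W ω))) P := by
    refine integrable_comp_of_abs_le (P := P) hW
      (f := fun j => (if j = k then (1 : ℝ) else 0) * (g (j + 1) - g j)) (C := 2 * C) fun j => ?_
    rw [abs_mul]
    refine (mul_le_of_le_one_left (abs_nonneg _) ?_).trans (hdiff j)
    split_ifs <;> simp
  have hcentred := integrable_sub_mul_comp_of_abs_le hW hint lam hg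
  calc ∫ ω, (lam * g (W ω + 1) - W ω * g (W ω)) ∂P
      = (∫ ω, (lam + if W ω = k then (1 : ℝ) else 0) * (g (W ω + 1) - g (W ω)) ∂P) -
          (∫ ω, ((W ω : ℝ) - lam) * g (W ω) ∂P) -
          ∫ ω, (if W ω = k then (1 : ℝ) else 0) * (g (W ω + 1) - g (W ω)) ∂P := by
        rw [← integral_sub hpert hcentred, ← integral_sub (hpert.sub' hcentred) hind]
        congr 1
        funext ω
        ring
    _ = -((P {ω | W ω = k}).toReal * (g (k + 1) - g k)) := by
        rw [hstein, integral_ite_eq_mul_comp hW k fun j => g (j + 1) - g j]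
        ring

end PerturbedStein

theorem dTV_of_perturbed_eq_general
    {Ω : Type*} [MeasurableSpace Ω] (P : Measure Ω) [IsProbabilityMeasure P]
    (lam : ℝ) (hlam : 0 < lam) (k : ℕ)
    (W : Ω → ℕ) (hW : Measurable W) (hint : Integrable (fun ω => (W ω : ℝ)) P)
    (hstein : ∀ g : ℕ → ℝ, (∃ C : ℝ, ∀ j : ℕ, |g j| ≤ C) →
      ∫ ω, ((W ω : ℝ) - lam) * g (W ω) ∂P =
        ∫ ω, (lam + if W ω = k then (1 : ℝ) else 0) * (g (W ω + 1) - g (W ω)) ∂P) :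
    (⨆ A : Set ℕ, |(P {ω | W ω ∈ A}).toReal - poissonProb lam A|) =
      (P {ω | W ω = k}).toReal *
        ⨆ A : Set ℕ, |steinSol lam A (k + 1) - steinSol lam A k| := by
  have hdist : ∀ A : Set ℕ, |(P {ω | W ω ∈ A}).toReal - poissonProb lam A| =
      (P {ω | W ω = k}).toReal * |steinSol lam A (k + 1) - steinSol lam A k| := by
    intro A
    have hbdd := abs_steinSol_le A hlam
    have hlaw : ∫ ω, (lam * steinSol lam A (W ω + 1) - W ω * steinSol lam A (W ω)) ∂P =
        (P {ω | W ω ∈ A}).toReal - poissonProb lam A := by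
      simp_rw [steinSol_stein_equation A hlam.ne']
      exact integral_indicator_comp_sub_const hW A _
    rw [← hlaw, integral_stein_operator_eq_of_perturbed hW hint hbdd (hstein _ ⟨_, hbdd⟩), abs_neg,
      abs_mul, ENNReal.abs_toReal]
  rw [iSup_congr hdist, Real.mul_iSup_of_nonneg ENNReal.toReal_nonneg]

/-- Let `λ > 0`, `k ≥ 1`, and let `W` be a `ℕ`-valued random variable with
`E[W] < ∞` such that `E[(W − λ) g(W)] = E[(λ + 1{W = k})(g(W+1) − g(W))]` for every bounded
`g`. Then `d_TV(L(W), Po(λ)) = P[W = k] · sup_{A ⊆ ℤ≥0} |g_A(k+1) − g_A(k)|`. -/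
theorem dTV_of_perturbed_eq
    {Ω : Type*} [MeasurableSpace Ω] (P : Measure Ω) [IsProbabilityMeasure P]
    (lam : ℝ) (hlam : 0 < lam) (k : ℕ) (hk : 1 ≤ k)
    (W : Ω → ℕ) (hW : Measurable W) (hint : Integrable (fun ω => (W ω : ℝ)) P)
    (hstein : ∀ g : ℕ → ℝ, (∃ C : ℝ, ∀ j : ℕ, |g j| ≤ C) →
      ∫ ω, ((W ω : ℝ) - lam) * g (W ω) ∂P =
        ∫ ω, (lam + if W ω = k then (1 : ℝ) else 0) * (g (W ω + 1) - g (W ω)) ∂P) :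
    (⨆ A : Set ℕ, |(P {ω | W ω ∈ A}).toReal - poissonProb lam A|) =
      (P {ω | W ω = k}).toReal *
        ⨆ A : Set ℕ, |steinSol lam A (k + 1) - steinSol lam A k| :=
  dTV_of_perturbed_eq_general P lam hlam k W hW hint hstein
end

section
/- Let Γ be a finite set containing two distinct points a and b, and let λ : Γ → [0, ∞) satisfy λ(a) = λ(b). Let Ψ be a random element of ℤ≥0^Γ with E[Σ_{α∈Γ} Ψ(α)] < ∞ satisfying E[B_0 g(Ψ)] = 0 for every bounded function g : ℤ≥0^Γ → ℝ, and suppose P[Ψ = δ_a] = P[Ψ = δ_b]. Then for every bounded g : ℤ≥0^Γ → ℝ, E[A g(Ψ)] = −P[Ψ = δ_a] · Δ_{ab} g(0), where Δ_{ab} g(ξ) = g(ξ+δ_a+δ_b) − g(ξ+δ_a) − g(ξ+δ_b) + g(ξ) and 0 is the empty configuration. -/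
open MeasureTheory

/-- The configuration with exactly one point at `a`. -/
def deltaAt {Γ : Type*} [DecidableEq Γ] (a : Γ) : Γ → ℕ := fun x => if x = a then 1 else 0

/-- The Poisson point process Stein operator
`A g(ξ) = Σ_α λ(α)[g(ξ+δ_α) − g(ξ)] + Σ_α ξ(α)[g(ξ−δ_α) − g(ξ)]`. -/
noncomputable def ppSteinA {Γ : Type*} [Fintype Γ] [DecidableEq Γ] (lam : Γ → ℝ)
    (g : (Γ → ℕ) → ℝ) (ξ : Γ → ℕ) : ℝ :=
  (∑ α, lam α * (g (ξ + deltaAt α) - g ξ)) + ∑ α, (ξ α : ℝ) * (g (ξ - deltaAt α) - g ξ)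

/-- The perturbed Poisson point process Stein operator `B_0`, perturbed at the
configurations `δ_a` and `δ_b`. -/
noncomputable def ppSteinB {Γ : Type*} [Fintype Γ] [DecidableEq Γ] (lam : Γ → ℝ) (a b : Γ)
    (g : (Γ → ℕ) → ℝ) (ξ : Γ → ℕ) : ℝ :=
  ppSteinA lam g ξ
    + (1 / 2) * (if ξ = deltaAt a then (1 : ℝ) else 0) * (g (ξ + deltaAt b) - g ξ)
    + (1 / 2) * (if ξ = deltaAt b then (1 : ℝ) else 0) * (g (ξ + deltaAt a) - g ξ)
    + (1 / 2) * (if ξ = deltaAt a then (1 : ℝ) else 0) * (g (ξ - deltaAt a) - g ξ)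
    + (1 / 2) * (if ξ = deltaAt b then (1 : ℝ) else 0) * (g (ξ - deltaAt b) - g ξ)

/-!
Away from the two configurations `δ_a` and `δ_b` the operators `B_0` and `A` agree, so
`0 = E[B_0 g(Ψ)]` is `E[A g(Ψ)]` plus two constants weighted by `P[Ψ = δ_a]` and
`P[Ψ = δ_b]`. When these probabilities are equal, the first-order terms `g(δ_a) - g(δ_b)`
cancel and the constants add up to `P[Ψ = δ_a] · Δ_{ab} g(0)`. Boundedness of `g` together
with the finite mean number of points makes `A g(Ψ)` integrable.
-/

section Operators

variable {Γ : Type*} [Fintype Γ] [DecidableEq Γ]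

theorem ppSteinB_eq (lam : Γ → ℝ) (a b : Γ) (g : (Γ → ℕ) → ℝ) (ξ : Γ → ℕ) :
    ppSteinB lam a b g ξ = ppSteinA lam g ξ
      + (if ξ = deltaAt a then (g (deltaAt a + deltaAt b) + g 0 - 2 * g (deltaAt a)) / 2
          else 0)
      + (if ξ = deltaAt b then (g (deltaAt a + deltaAt b) + g 0 - 2 * g (deltaAt b)) / 2
          else 0) := by
  unfold ppSteinB
  by_cases ha : ξ = deltaAt a
  · subst ha
    by_cases hab : deltaAt a = deltaAt b
    · simp only [← hab, if_true, tsub_self]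
      ring
    · simp only [hab, if_true, if_false, tsub_self]
      ring
  · by_cases hb : ξ = deltaAt b
    · subst hb
      simp only [ha, if_true, if_false, tsub_self, add_comm (deltaAt b)]
      ring
    · simp only [ha, hb, if_false]
      ring

theorem abs_ppSteinA_le (lam : Γ → ℝ) {g : (Γ → ℕ) → ℝ} {C : ℝ} (hC : ∀ ξ, |g ξ| ≤ C)
    (ξ : Γ → ℕ) :
    |ppSteinA lam g ξ| ≤ 2 * C * ((∑ α, |lam α|) + ∑ α, (ξ α : ℝ)) := by
  have hdiff : ∀ η ζ, |g η - g ζ| ≤ 2 * C := fun η ζ =>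
    (abs_sub _ _).trans (by linarith [hC η, hC ζ])
  have hterm : ∀ (c : ℝ) (η : Γ → ℕ), |c * (g η - g ξ)| ≤ 2 * C * |c| := fun c η => by
    rw [abs_mul, mul_comm]
    exact mul_le_mul_of_nonneg_right (hdiff η ξ) (abs_nonneg c)
  calc |ppSteinA lam g ξ|
      ≤ (∑ α, |lam α * (g (ξ + deltaAt α) - g ξ)|)
          + ∑ α, |(ξ α : ℝ) * (g (ξ - deltaAt α) - g ξ)| :=
        (abs_add_le _ _).trans
          (add_le_add (Finset.abs_sum_le_sum_abs _ _) (Finset.abs_sum_le_sum_abs _ _))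
    _ ≤ (∑ α, 2 * C * |lam α|) + ∑ α, 2 * C * |(ξ α : ℝ)| :=
        add_le_add (Finset.sum_le_sum fun α _ => hterm _ _)
          (Finset.sum_le_sum fun α _ => hterm _ _)
    _ = 2 * C * ((∑ α, |lam α|) + ∑ α, (ξ α : ℝ)) := by
        simp only [Nat.abs_cast, ← Finset.mul_sum, mul_add]

end Operators

section Indicators

variable {Ω X : Type*} [MeasurableSpace Ω] {P : Measure Ω} [MeasurableSpace X]
  [MeasurableSingletonClass X] [DecidableEq X] {Ψ : Ω → X}

omit [MeasurableSpace Ω] [MeasurableSpace X] [MeasurableSingletonClass X] in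
theorem ite_eq_indicator (Ψ : Ω → X) (x : X) (c : ℝ) :
    (fun ω => if Ψ ω = x then c else 0) = {ω | Ψ ω = x}.indicator (fun _ => c) := by
  ext ω
  simp [Set.indicator_apply]

theorem integrable_ite_eq [IsFiniteMeasure P] (hΨ : Measurable Ψ) (x : X) (c : ℝ) :
    Integrable (fun ω => if Ψ ω = x then c else 0) P := by
  rw [ite_eq_indicator]
  exact (integrable_const c).indicator (hΨ (measurableSet_singleton x))

theorem integral_ite_eq [IsFiniteMeasure P] (hΨ : Measurable Ψ) (x : X) (c : ℝ) :
    ∫ ω, (if Ψ ω = x then c else 0) ∂P = P.real {ω | Ψ ω = x} * c := by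
  rw [ite_eq_indicator,
    integral_indicator_const (s := {ω | Ψ ω = x}) c (hΨ (measurableSet_singleton x)),
    smul_eq_mul]

end Indicators

section Expectations

variable {Ω : Type*} [MeasurableSpace Ω] {P : Measure Ω}
  {Γ : Type*} [Fintype Γ] [DecidableEq Γ] {Ψ : Ω → Γ → ℕ}

theorem integrable_ppSteinA [IsFiniteMeasure P] (lam : Γ → ℝ) (hΨ : Measurable Ψ)
    (hint : Integrable (fun ω => ∑ α, (Ψ ω α : ℝ)) P) {g : (Γ → ℕ) → ℝ} {C : ℝ}
    (hC : ∀ ξ, |g ξ| ≤ C) :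
    Integrable (fun ω => ppSteinA lam g (Ψ ω)) P :=
  (((integrable_const (∑ α, |lam α|)).add hint).const_mul (2 * C)).mono'
    ((measurable_of_countable (ppSteinA lam g)).comp hΨ).aestronglyMeasurable
    (Filter.Eventually.of_forall fun ω => abs_ppSteinA_le lam hC (Ψ ω))

theorem integral_ppSteinB [IsFiniteMeasure P] (lam : Γ → ℝ) (a b : Γ) (hΨ : Measurable Ψ)
    (hint : Integrable (fun ω => ∑ α, (Ψ ω α : ℝ)) P) {g : (Γ → ℕ) → ℝ} {C : ℝ}
    (hC : ∀ ξ, |g ξ| ≤ C) :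
    ∫ ω, ppSteinB lam a b g (Ψ ω) ∂P = ∫ ω, ppSteinA lam g (Ψ ω) ∂P
      + P.real {ω | Ψ ω = deltaAt a} * ((g (deltaAt a + deltaAt b) + g 0 - 2 * g (deltaAt a)) / 2)
      + P.real {ω | Ψ ω = deltaAt b} * ((g (deltaAt a + deltaAt b) + g 0 - 2 * g (deltaAt b)) / 2)
    := by
  have hA := integrable_ppSteinA lam hΨ hint hC
  simp only [ppSteinB_eq]
  rw [integral_add, integral_add hA, integral_ite_eq hΨ, integral_ite_eq hΨ]
  all_goals first
    | exact integrable_ite_eq hΨ _ _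
    | exact hA.add (integrable_ite_eq hΨ _ _)

end Expectations

theorem pp_perturbed_stein_identity_general
    {Ω : Type*} [MeasurableSpace Ω] (P : Measure Ω) [IsProbabilityMeasure P]
    {Γ : Type*} [Fintype Γ] [DecidableEq Γ] (a b : Γ)
    (lam : Γ → ℝ)
    (Ψ : Ω → Γ → ℕ) (hΨ : Measurable Ψ)
    (hint : Integrable (fun ω => ∑ α, (Ψ ω α : ℝ)) P)
    (hstein : ∀ g : (Γ → ℕ) → ℝ, (∃ C : ℝ, ∀ ξ, |g ξ| ≤ C) →
      ∫ ω, ppSteinB lam a b g (Ψ ω) ∂P = 0)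
    (hsym : P {ω | Ψ ω = deltaAt a} = P {ω | Ψ ω = deltaAt b}) :
    ∀ g : (Γ → ℕ) → ℝ, (∃ C : ℝ, ∀ ξ, |g ξ| ≤ C) →
      ∫ ω, ppSteinA lam g (Ψ ω) ∂P =
        -(P {ω | Ψ ω = deltaAt a}).toReal *
          (g (deltaAt a + deltaAt b) - g (deltaAt a) - g (deltaAt b) + g 0) := by
  rintro g ⟨C, hC⟩
  have hB := hstein g ⟨C, hC⟩
  rw [integral_ppSteinB lam a b hΨ hint hC, measureReal_def, measureReal_def, ← hsym] at hB
  linear_combination hB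

/-- Let `Γ` be a finite set with distinct points `a ≠ b` and
`λ : Γ → [0,∞)` with `λ(a) = λ(b)`. If `Ψ` is a random configuration with finite mean number
of points satisfying `E[B_0 g(Ψ)] = 0` for every bounded `g` and `P[Ψ = δ_a] = P[Ψ = δ_b]`,
then for every bounded `g`, `E[A g(Ψ)] = −P[Ψ = δ_a] · Δ_{ab} g(0)`. -/
theorem pp_perturbed_stein_identity
    {Ω : Type*} [MeasurableSpace Ω] (P : Measure Ω) [IsProbabilityMeasure P]
    {Γ : Type*} [Fintype Γ] [DecidableEq Γ] (a b : Γ) (hab : a ≠ b)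
    (lam : Γ → ℝ) (hlam : ∀ α, 0 ≤ lam α) (hlamab : lam a = lam b)
    (Ψ : Ω → Γ → ℕ) (hΨ : Measurable Ψ)
    (hint : Integrable (fun ω => ∑ α, (Ψ ω α : ℝ)) P)
    (hstein : ∀ g : (Γ → ℕ) → ℝ, (∃ C : ℝ, ∀ ξ, |g ξ| ≤ C) →
      ∫ ω, ppSteinB lam a b g (Ψ ω) ∂P = 0)
    (hsym : P {ω | Ψ ω = deltaAt a} = P {ω | Ψ ω = deltaAt b}) :
    ∀ g : (Γ → ℕ) → ℝ, (∃ C : ℝ, ∀ ξ, |g ξ| ≤ C) →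
      ∫ ω, ppSteinA lam g (Ψ ω) ∂P =
        -(P {ω | Ψ ω = deltaAt a}).toReal *
          (g (deltaAt a + deltaAt b) - g (deltaAt a) - g (deltaAt b) + g 0) :=
  pp_perturbed_stein_identity_general P a b lam Ψ hΨ hint hstein hsym
end
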